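/- Let X and Y be i.i.d. uniform {0,1}-valued random variables and let U, V be ℤ-valued random variables jointly distributed with X and Y. If U and V are finitely supported (each takes only finitely many values with positive probability), then properties (S1)–(S3) cannot all be satisfied: if (U,X) is independent of (V,Y), U+V is independent of X, and U+V is independent of Y, then U+V is independent of X⊕Y, so X⊕Y cannot be almost surely determined by U+V. -/

import Mathlib

/-!
Since `V` is independent of `(U, X)`, for each `x` the function `w ↦ μ(U + V = w, X = x)` is the
convolution of `u ↦ μ(U = u, X = x)` with the law of `V`, and likewise with `μ(U = u) μ(X = x)` in
place of `μ(U = u, X = x)`. Independence of `U + V` and `X` says that the two convolutions agree.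
Finitely supported functions on `ℤ` convolve as elements of the Laurent polynomial ring
`ℝ≥0[ℤ]`, in which multiplication by a nonzero element is cancellative; so `U` is independent
of `X`, and then `X` is independent of `(U, V, Y)`. The uniform bit `X` acts as a one-time pad:
`X + Y` is uniform and independent of `(U, V, Y)`, in particular of `U + V`. A nonconstant
variable independent of `U + V` cannot be a function of `U + V`.
-/

open MeasureTheory ProbabilityTheory
open scoped ENNReal NNReal

theorem eq_of_forall_tsum_mul_sub_eq {G : Type*} [AddCommGroup G] [UniqueSums G]
    {a b n : G → ℝ≥0∞} (ha : a.support.Finite) (hb : b.support.Finite) (hn : n.support.Finite)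
    (ha_top : ∀ g, a g ≠ ∞) (hb_top : ∀ g, b g ≠ ∞) (hn_top : ∀ g, n g ≠ ∞) (hn0 : n ≠ 0)
    (h : ∀ w, ∑' u, a u * n (w - u) = ∑' u, b u * n (w - u)) : a = b := by
  have lift (f : G → ℝ≥0∞) (hf : f.support.Finite) (hf_top : ∀ g, f g ≠ ∞) :
      ∃ F : AddMonoidAlgebra ℝ≥0 G, ∀ g, (F.coeff g : ℝ≥0∞) = f g :=
    ⟨.ofCoeff (.ofSupportFinite (fun g => (f g).toNNReal)
      (hf.subset fun g hg h0 => hg (by simp [h0]))), fun g => ENNReal.coe_toNNReal (hf_top g)⟩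
  obtain ⟨A, hA⟩ := lift a ha ha_top
  obtain ⟨B, hB⟩ := lift b hb hb_top
  obtain ⟨N, hN⟩ := lift n hn hn_top
  have coeff_mul (F : AddMonoidAlgebra ℝ≥0 G) (f : G → ℝ≥0∞) (hF : ∀ g, (F.coeff g : ℝ≥0∞) = f g)
      (w : G) : ((F * N).coeff w : ℝ≥0∞) = ∑' u, f u * n (w - u) := by
    classical
    rw [AddMonoidAlgebra.coeff_mul_apply_left, Finsupp.sum, ENNReal.ofNNReal_finsetSum,
      tsum_eq_sum (s := F.coeff.support)]
    · simp only [ENNReal.coe_mul, hF, hN, neg_add_eq_sub]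
    · intro u hu
      rw [Finsupp.notMem_support_iff] at hu
      rw [← hF, hu, ENNReal.coe_zero, zero_mul]
  have hN0 : N ≠ 0 := by
    rintro rfl
    exact hn0 (funext fun g => by simp [← hN])
  have hAB : A = B := by
    refine mul_right_cancel₀ hN0 (AddMonoidAlgebra.coeff_inj.1 (Finsupp.ext fun w => ?_))
    exact ENNReal.coe_injective <| by rw [coeff_mul A a hA, coeff_mul B b hB, h]
  funext g
  rw [← hA, ← hB, hAB]

namespace ProbabilityTheory

variable {Ω α β γ : Type*} [MeasurableSpace Ω] {μ : Measure Ω}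
  [MeasurableSpace α] [MeasurableSpace β] [MeasurableSpace γ]

theorem _root_.MeasureTheory.measure_eq_tsum_measure_inter_preimage_singleton [Countable β]
    [MeasurableSingletonClass β] {f : Ω → β} (hf : Measurable f) (s : Set Ω) :
    μ s = ∑' b, μ (s ∩ f ⁻¹' {b}) := by
  rw [← Measure.restrict_apply_univ, ← Set.preimage_univ (f := f),
    ← tsum_measure_preimage_singleton Set.countable_univ fun b _ => hf (measurableSet_singleton b),
    tsum_univ fun b => μ.restrict s (f ⁻¹' {b})]
  simp_rw [Measure.restrict_apply (hf (measurableSet_singleton _)), Set.inter_comm]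

theorem indepFun_of_measure_inter_preimage_singleton_eq_mul [IsFiniteMeasure μ]
    [Countable α] [MeasurableSingletonClass α] [Countable β] [MeasurableSingletonClass β]
    {f : Ω → α} {g : Ω → β} (hf : Measurable f) (hg : Measurable g)
    (h : ∀ a b, μ (f ⁻¹' {a} ∩ g ⁻¹' {b}) = μ (f ⁻¹' {a}) * μ (g ⁻¹' {b})) :
    IndepFun f g μ := by
  rw [indepFun_iff_map_prod_eq_prod_map_map hf.aemeasurable hg.aemeasurable]
  refine Measure.ext_of_singleton fun ⟨a, b⟩ => ?_
  rw [← Set.singleton_prod_singleton, Measure.prod_prod,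
    Measure.map_apply (hf.prodMk hg) ((measurableSet_singleton a).prod (measurableSet_singleton b)),
    Measure.map_apply hf (measurableSet_singleton _),
    Measure.map_apply hg (measurableSet_singleton _),
    Set.mk_preimage_prod, h]

section AddGroup

variable {G : Type*} [AddCommGroup G] [MeasurableSpace G] [MeasurableSingletonClass G]
  [Countable G] {U V : Ω → G} {X : Ω → β}

theorem IndepFun.measure_add_preimage_singleton_inter (hU : Measurable U)
    (h : IndepFun (fun ω => (U ω, X ω)) V μ) (w : G) {s : Set β} (hs : MeasurableSet s) :
    μ ((fun ω => U ω + V ω) ⁻¹' {w} ∩ X ⁻¹' s)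
      = ∑' u, μ (U ⁻¹' {u} ∩ X ⁻¹' s) * μ (V ⁻¹' {w - u}) := by
  rw [measure_eq_tsum_measure_inter_preimage_singleton hU]
  refine tsum_congr fun u => ?_
  have hu := h.measure_inter_preimage_eq_mul _ _ ((measurableSet_singleton u).prod hs)
    (measurableSet_singleton (w - u))
  rw [Set.mk_preimage_prod] at hu
  rw [← hu]
  congr 1
  ext ω
  simp only [Set.mem_inter_iff, Set.mem_preimage, Set.mem_singleton_iff]
  constructor
  · rintro ⟨⟨hw, hs⟩, rfl⟩
    exact ⟨⟨rfl, hs⟩, eq_sub_of_add_eq' hw⟩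
  · rintro ⟨⟨rfl, hs⟩, hv⟩
    exact ⟨⟨by rw [hv, add_sub_cancel], hs⟩, rfl⟩

theorem IndepFun.indepFun_of_indepFun_add [UniqueSums G] [IsProbabilityMeasure μ] [Countable β]
    [MeasurableSingletonClass β] (hU : Measurable U) (hX : Measurable X)
    (hUXV : IndepFun (fun ω => (U ω, X ω)) V μ) (hWX : IndepFun (fun ω => U ω + V ω) X μ)
    (hUfin : {u | μ (U ⁻¹' {u}) ≠ 0}.Finite) (hVfin : {v | μ (V ⁻¹' {v}) ≠ 0}.Finite) :
    IndepFun U X μ := by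
  refine indepFun_of_measure_inter_preimage_singleton_eq_mul hU hX fun u x => ?_
  have hconv (w : G) : ∑' u, μ (U ⁻¹' {u} ∩ X ⁻¹' {x}) * μ (V ⁻¹' {w - u})
      = ∑' u, μ (U ⁻¹' {u}) * μ (X ⁻¹' {x}) * μ (V ⁻¹' {w - u}) := by
    have hW := hUXV.measure_add_preimage_singleton_inter hU w MeasurableSet.univ
    simp only [Set.preimage_univ, Set.inter_univ] at hW
    rw [← hUXV.measure_add_preimage_singleton_inter hU w (measurableSet_singleton x),
      hWX.measure_inter_preimage_eq_mul _ _ (measurableSet_singleton w) (measurableSet_singleton x),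
      hW, ← ENNReal.tsum_mul_right]
    exact tsum_congr fun u => mul_right_comm _ _ _
  have hV0 : (fun v => μ (V ⁻¹' {v})) ≠ 0 := fun h0 => by
    simpa using (measure_preimage_eq_zero_iff_of_countable Set.countable_univ).2
      fun v _ => congrFun h0 v
  refine congrFun (eq_of_forall_tsum_mul_sub_eq (hUfin.subset fun u hu => ?_)
    (hUfin.subset fun u hu => ?_) hVfin (fun _ => measure_ne_top _ _)
    (fun _ => ENNReal.mul_ne_top (measure_ne_top _ _) (measure_ne_top _ _))
    (fun _ => measure_ne_top _ _) hV0 hconv) u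
  · exact fun h0 => hu (measure_mono_null Set.inter_subset_left h0)
  · exact left_ne_zero_of_mul hu

end AddGroup

variable {f : Ω → α} {g : Ω → β} {k : Ω → γ}

theorem IndepFun.indepFun_prodMk_of_indepFun_prodMk [IsFiniteMeasure μ]
    [Countable α] [MeasurableSingletonClass α] [Countable β] [MeasurableSingletonClass β]
    [Countable γ] [MeasurableSingletonClass γ] (hf : Measurable f) (hg : Measurable g)
    (hk : Measurable k) (hfg : IndepFun f g μ) (h : IndepFun (fun ω => (f ω, g ω)) k μ) :
    IndepFun g (fun ω => (f ω, k ω)) μ := by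
  refine indepFun_of_measure_inter_preimage_singleton_eq_mul hg (hf.prodMk hk) fun b ⟨a, c⟩ => ?_
  have hfk : IndepFun f k μ := h.comp measurable_fst measurable_id
  have hfgk := h.measure_inter_preimage_eq_mul _ _
    ((measurableSet_singleton a).prod (measurableSet_singleton b)) (measurableSet_singleton c)
  rw [Set.mk_preimage_prod] at hfgk
  rw [← Set.singleton_prod_singleton, Set.mk_preimage_prod, Set.inter_left_comm,
    ← Set.inter_assoc, hfgk,
    hfk.measure_inter_preimage_eq_mul _ _ (measurableSet_singleton a) (measurableSet_singleton c),
    hfg.measure_inter_preimage_eq_mul _ _ (measurableSet_singleton a) (measurableSet_singleton b)]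
  ring

section OneTimePad

variable {G : Type*} [AddGroup G] [MeasurableSpace G] [MeasurableSingletonClass G]
  [MeasurableSingletonClass γ] {X : Ω → G} {Z : Ω → γ} {c : ℝ≥0∞}

theorem IndepFun.measure_add_comp_preimage_singleton_inter (hXZ : IndepFun X Z μ)
    (hunif : ∀ a, μ (X ⁻¹' {a}) = c) (φ : γ → G) (s : G) (z : γ) :
    μ ((fun ω => X ω + φ (Z ω)) ⁻¹' {s} ∩ Z ⁻¹' {z}) = c * μ (Z ⁻¹' {z}) := by
  have hset : (fun ω => X ω + φ (Z ω)) ⁻¹' {s} ∩ Z ⁻¹' {z} = X ⁻¹' {s - φ z} ∩ Z ⁻¹' {z} := by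
    ext ω
    simp only [Set.mem_inter_iff, Set.mem_preimage, Set.mem_singleton_iff]
    constructor
    · rintro ⟨hs, rfl⟩
      exact ⟨eq_sub_of_add_eq hs, rfl⟩
    · rintro ⟨hx, rfl⟩
      exact ⟨by rw [hx, sub_add_cancel], rfl⟩
  rw [hset, hXZ.measure_inter_preimage_eq_mul _ _ (measurableSet_singleton _)
    (measurableSet_singleton _), hunif]

theorem IndepFun.measure_add_comp_preimage_singleton [IsProbabilityMeasure μ] [Countable γ]
    (hZ : Measurable Z) (hXZ : IndepFun X Z μ) (hunif : ∀ a, μ (X ⁻¹' {a}) = c) (φ : γ → G)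
    (s : G) : μ ((fun ω => X ω + φ (Z ω)) ⁻¹' {s}) = c := by
  have htotal := measure_eq_tsum_measure_inter_preimage_singleton (μ := μ) hZ Set.univ
  simp only [measure_univ, Set.univ_inter] at htotal
  rw [measure_eq_tsum_measure_inter_preimage_singleton hZ]
  simp_rw [hXZ.measure_add_comp_preimage_singleton_inter hunif]
  rw [ENNReal.tsum_mul_left, ← htotal, mul_one]

theorem IndepFun.indepFun_add_comp [IsProbabilityMeasure μ] [Countable G] [Countable γ]
    (hX : Measurable X) (hZ : Measurable Z) (hXZ : IndepFun X Z μ) (hunif : ∀ a, μ (X ⁻¹' {a}) = c) (φ : γ → G) :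
    IndepFun (fun ω => X ω + φ (Z ω)) Z μ := by
  refine indepFun_of_measure_inter_preimage_singleton_eq_mul
    (hX.add ((measurable_of_countable φ).comp hZ)) hZ fun s z => ?_
  rw [hXZ.measure_add_comp_preimage_singleton_inter hunif,
    hXZ.measure_add_comp_preimage_singleton hZ hunif]

end OneTimePad

theorem IndepFun.measure_preimage_eq_zero_or_one_of_ae_eq_comp [IsProbabilityMeasure μ]
    {φ : β → α} (hfg : IndepFun f g μ) (hf : Measurable f) (hφ : Measurable φ)
    (hfφ : ∀ᵐ ω ∂μ, f ω = φ (g ω)) {s : Set α} (hs : MeasurableSet s) :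
    μ (f ⁻¹' s) = 0 ∨ μ (f ⁻¹' s) = 1 := by
  have hff : IndepFun f f μ :=
    (hfg.comp measurable_id hφ).congr (ae_eq_refl _) (hfφ.mono fun _ h => h.symm)
  refine measure_eq_zero_or_one_of_indepSet_self
    ((indepSet_iff_measure_inter_eq_mul (hf hs) (hf hs) μ).2 ?_)
  simpa using hff.measure_inter_preimage_eq_mul s s hs hs

end ProbabilityTheory

theorem no_finitely_supported_secure_xor_general
    {Ω : Type*} [MeasurableSpace Ω] (μ : Measure Ω) [IsProbabilityMeasure μ]
    (X Y : Ω → ZMod 2) (U V : Ω → ℤ)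
    (hX : Measurable X) (hY : Measurable Y) (hUm : Measurable U) (hVm : Measurable V)
    -- X and Y are i.i.d. uniform on {0,1}
    (hXunif : ∀ a : ZMod 2, μ (X ⁻¹' {a}) = 1 / 2)
    -- U and V are finitely supported
    (hUfin : {k : ℤ | μ (U ⁻¹' {k}) ≠ 0}.Finite)
    (hVfin : {k : ℤ | μ (V ⁻¹' {k}) ≠ 0}.Finite)
    -- (S1)
    (hS1 : IndepFun (fun ω => (U ω, X ω)) (fun ω => (V ω, Y ω)) μ)
    -- (S2)
    (hS2X : IndepFun (fun ω => U ω + V ω) X μ) :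
    IndepFun (fun ω => U ω + V ω) (fun ω => X ω + Y ω) μ ∧
      ¬ ∃ g : ℤ → ZMod 2, ∀ᵐ ω ∂μ, X ω + Y ω = g (U ω + V ω) := by
  have hUX : IndepFun U X μ :=
    (hS1.comp measurable_id measurable_fst).indepFun_of_indepFun_add hUm hX hS2X hUfin hVfin
  have hXrest : IndepFun X (fun ω => (U ω, V ω, Y ω)) μ :=
    hUX.indepFun_prodMk_of_indepFun_prodMk hUm hX (hVm.prodMk hY) hS1
  have hXor : IndepFun (fun ω => X ω + Y ω) (fun ω => (U ω, V ω, Y ω)) μ :=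
    hXrest.indepFun_add_comp hX (hUm.prodMk (hVm.prodMk hY)) hXunif fun z => z.2.2
  have hXor_unif : μ ((fun ω => X ω + Y ω) ⁻¹' {0}) = 1 / 2 :=
    hXrest.measure_add_comp_preimage_singleton (hUm.prodMk (hVm.prodMk hY)) hXunif
      (fun z => z.2.2) 0
  have hXorW : IndepFun (fun ω => X ω + Y ω) (fun ω => U ω + V ω) μ :=
    hXor.comp measurable_id (measurable_of_countable fun z : ℤ × ℤ × ZMod 2 => z.1 + z.2.1)
  refine ⟨hXorW.symm, fun ⟨g, hg⟩ => ?_⟩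
  rcases hXorW.measure_preimage_eq_zero_or_one_of_ae_eq_comp (hX.add hY) (measurable_of_countable g)
    hg (measurableSet_singleton 0) with h | h <;> rw [hXor_unif] at h <;> norm_num at h

/-- Let `X, Y` be i.i.d. uniform `{0,1}`-valued random variables and `U, V`
integer-valued random variables jointly distributed with them.  If `U` and `V` are finitely
supported, then (S1)–(S3) cannot all hold: if `(U,X) ⫫ (V,Y)`, `U+V ⫫ X` and `U+V ⫫ Y`, then
`U+V ⫫ X⊕Y`, so `X⊕Y` cannot be almost surely determined by `U+V`. -/
theorem no_finitely_supported_secure_xor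
    {Ω : Type*} [MeasurableSpace Ω] (μ : Measure Ω) [IsProbabilityMeasure μ]
    (X Y : Ω → ZMod 2) (U V : Ω → ℤ)
    (hX : Measurable X) (hY : Measurable Y) (hUm : Measurable U) (hVm : Measurable V)
    -- X and Y are i.i.d. uniform on {0,1}
    (hXY : IndepFun X Y μ)
    (hXunif : ∀ a : ZMod 2, μ (X ⁻¹' {a}) = 1 / 2)
    (hYunif : ∀ a : ZMod 2, μ (Y ⁻¹' {a}) = 1 / 2)
    -- U and V are finitely supported
    (hUfin : {k : ℤ | μ (U ⁻¹' {k}) ≠ 0}.Finite)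
    (hVfin : {k : ℤ | μ (V ⁻¹' {k}) ≠ 0}.Finite)
    -- (S1)
    (hS1 : IndepFun (fun ω => (U ω, X ω)) (fun ω => (V ω, Y ω)) μ)
    -- (S2)
    (hS2X : IndepFun (fun ω => U ω + V ω) X μ)
    (hS2Y : IndepFun (fun ω => U ω + V ω) Y μ) :
    IndepFun (fun ω => U ω + V ω) (fun ω => X ω + Y ω) μ ∧
      ¬ ∃ g : ℤ → ZMod 2, ∀ᵐ ω ∂μ, X ω + Y ω = g (U ω + V ω) :=
  no_finitely_supported_secure_xor_general μ X Y U V hX hY hUm hVm hXunif hUfin hVfin hS1 hS2X
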